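/- Let X be the constructed set. Then a Tverberg partition X_1, ..., X_r of X with x^i ∈ X_i is uniquely determined by the d bijections σ_j : A_j → {1,...,r} \ {i(j)} defined by x ∈ X_{σ_j(x)} for x ∈ A_j; this correspondence is a bijection between Tverberg partitions (with x^i ∈ X_i) and d-tuples of such bijections. -/

import Mathlib

open Finset Set

/-- The standard basis vector `e^j` of `ℝ^d`. -/
noncomputable def stdVec (d : ℕ) (j : Fin d) : Fin d → ℝ := Pi.single j 1

/-- The set `A_j = {e^j, 2e^j, ..., (r-1)e^j}`. -/
def Aset (d r : ℕ) (j : Fin d) : Set (Fin d → ℝ) :=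
  {v | ∃ k : ℕ, 1 ≤ k ∧ k ≤ r - 1 ∧ v = (k : ℝ) • stdVec d j}

/-- The point `x^i`, with `x^i_j = 0` if `i = i(j)` and `x^i_j = -i` otherwise
(indices taken in `{1,...,r}`, so `Fin r` index `i` corresponds to `i+1`). -/
def xpt (d r : ℕ) (ι : Fin d → Fin r) (i : Fin r) : Fin d → ℝ :=
  fun j => if ι j = i then 0 else -((i : ℕ) + 1 : ℝ)

/-- The set `A = {x^1, ..., x^r}`. -/
def Apts (d r : ℕ) (ι : Fin d → Fin r) : Set (Fin d → ℝ) := Set.range (xpt d r ι)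

/-- The constructed set `X = A ∪ A_1 ∪ ⋯ ∪ A_d`. -/
def Xset (d r : ℕ) (ι : Fin d → Fin r) : Set (Fin d → ℝ) :=
  Apts d r ι ∪ ⋃ j, Aset d r j

/-- `P : Fin r → Set (Fin d → ℝ)` is a Tverberg partition of `X`:
a partition of `X` into pairwise disjoint parts whose convex hulls share a point. -/
def IsTverbergPartition (d r : ℕ) (X : Set (Fin d → ℝ))
    (P : Fin r → Set (Fin d → ℝ)) : Prop :=
  (⋃ i, P i) = X ∧ (∀ i i', i ≠ i' → Disjoint (P i) (P i')) ∧
    ∃ p : Fin d → ℝ, ∀ i, p ∈ convexHull ℝ (P i)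

/-!
A tuple `σ` determines the partition `X_i = {x^i} ∪ ⋃_j σ_j⁻¹(i)`, and `0` lies in every
`conv X_i`: the point `x^i` is cancelled by positive multiples of the points `σ_j⁻¹(i)`, one on
each axis `j` with `i(j) ≠ i`.

Conversely, let `p` be a common point of a Tverberg partition with `x^i ∈ X_i`. Its coordinate
`p_j` is `≥ 0` because `X_{i(j)}` lies in `{v_j ≥ 0}`, and `≤ 0` because by pigeonhole one of the
`r` parts misses the `r - 1` points of `A_j` and hence lies in `{v_j ≤ 0}`. So `p = 0`, which
forces every part `X_i` with `i ≠ i(j)` to meet `A_j`; by disjointness and counting, sending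
`x ∈ A_j` to the index of its part is a bijection `A_j ≃ {1,…,r} \ {i(j)}`.
-/

open Function

lemma eq_of_mem_of_pairwise_disjoint {α β : Type*} {P : β → Set α}
    (hP : Pairwise (Disjoint on P)) {b b' : β} {x : α} (hb : x ∈ P b) (hb' : x ∈ P b') :
    b = b' :=
  by_contra fun hne => Set.disjoint_left.1 (hP hne) hb hb'

lemma exists_injective_mem_of_pairwise_disjoint {α β : Type*} {P : β → Set α}
    (hP : Pairwise (Disjoint on P)) {S : Set α} (hS : ∀ b, ∃ x ∈ S, x ∈ P b) :
    ∃ f : β → S, Injective f ∧ ∀ b, (f b : α) ∈ P b := by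
  choose f hfS hfP using hS
  refine ⟨fun b => ⟨f b, hfS b⟩, fun b b' h => ?_, hfP⟩
  have hf : f b = f b' := congrArg Subtype.val h
  exact eq_of_mem_of_pairwise_disjoint hP (hfP b) (hf ▸ hfP b')

section ConvexHull

variable {E : Type*} [AddCommGroup E] [Module ℝ E] {s : Set E}

lemma zero_mem_convexHull_of_add_sum_eq_zero {κ : Type*} [Fintype κ] {y : E} (hy : y ∈ s)
    {v : κ → E} (hv : ∀ k, ∃ c : ℝ, 0 ≤ c ∧ ∃ x ∈ s, v k = c • x) (h : y + ∑ k, v k = 0) :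
    (0 : E) ∈ convexHull ℝ s := by
  choose c hc x hxs hvx using hv
  let w : Option κ → ℝ := fun o => o.elim 1 c
  let z : Option κ → E := fun o => o.elim y x
  have hw : ∀ o ∈ Finset.univ, 0 ≤ w o := by
    rintro (_ | k) - <;> simp [w, hc]
  have hwpos : 0 < ∑ o, w o := by
    rw [Fintype.sum_option]
    exact add_pos_of_pos_of_nonneg one_pos (Finset.sum_nonneg fun k _ => hc k)
  have hz : ∀ o ∈ Finset.univ, z o ∈ s := by
    rintro (_ | k) - <;> simp [z, hy, hxs]
  have hwz : ∑ o, w o • z o = 0 := by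
    simpa [Fintype.sum_option, w, z, one_smul, ← hvx] using h
  simpa [Finset.centerMass, hwz] using Finset.centerMass_mem_convexHull _ hw hwpos hz

lemma zero_notMem_convexHull_of_forall_pos {f : E → ℝ} (hf : IsLinearMap ℝ f)
    (h : ∀ x ∈ s, 0 < f x) : (0 : E) ∉ convexHull ℝ s := fun h0 => by
  have : 0 < f 0 := convexHull_min h (convex_halfSpace_gt hf 0) h0
  exact this.ne' hf.mk'.map_zero

end ConvexHull

section Configuration

variable {d r : ℕ} {ι : Fin d → Fin r} {j j' : Fin d} {x : Fin d → ℝ}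

lemma Aset_eq_range (d r : ℕ) (j : Fin d) :
    Aset d r j = Set.range fun k : Fin (r - 1) => ((k : ℝ) + 1) • stdVec d j := by
  ext x
  constructor
  · rintro ⟨k, hk1, hkr, rfl⟩
    exact ⟨⟨k - 1, by omega⟩, by simp [Nat.cast_sub hk1]⟩
  · rintro ⟨k, rfl⟩
    exact ⟨k + 1, by omega, by omega, by simp⟩

instance (d r : ℕ) (j : Fin d) : Finite (Aset d r j) := by
  rw [Aset_eq_range]
  infer_instance

lemma Nat.card_Aset (d r : ℕ) (j : Fin d) : Nat.card (Aset d r j) = r - 1 := by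
  rw [Aset_eq_range, Nat.card_range_of_injective, Nat.card_eq_fintype_card, Fintype.card_fin]
  intro k k' h
  simpa [stdVec, Fin.ext_iff] using congrFun h j

lemma one_le_apply_of_mem_Aset (hx : x ∈ Aset d r j) : 1 ≤ x j := by
  obtain ⟨k, hk, -, rfl⟩ := hx
  simpa [stdVec] using hk

lemma apply_eq_zero_of_mem_Aset (hx : x ∈ Aset d r j) (h : j' ≠ j) : x j' = 0 := by
  obtain ⟨k, -, -, rfl⟩ := hx
  simp [stdVec, h]

lemma apply_nonneg_of_mem_Aset (hx : x ∈ Aset d r j) (j' : Fin d) : 0 ≤ x j' := by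
  rcases eq_or_ne j' j with rfl | h
  · exact zero_le_one.trans (one_le_apply_of_mem_Aset hx)
  · exact (apply_eq_zero_of_mem_Aset hx h).ge

lemma single_eq_smul_of_mem_Aset (hx : x ∈ Aset d r j) (a : ℝ) :
    Pi.single j a = (a / x j) • x := by
  obtain ⟨k, hk, -, rfl⟩ := hx
  have hk : (k : ℝ) ≠ 0 := by positivity
  ext j'
  rcases eq_or_ne j' j with rfl | h <;> simp [stdVec, *]

lemma Aset_disjoint (h : j ≠ j') : Disjoint (Aset d r j) (Aset d r j') :=
  Set.disjoint_left.2 fun _ hx hx' =>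
    (one_le_apply_of_mem_Aset hx).not_gt (by simp [apply_eq_zero_of_mem_Aset hx' h])

lemma xpt_apply_self (j : Fin d) : xpt d r ι (ι j) j = 0 := if_pos rfl

lemma xpt_apply_of_ne {i : Fin r} (h : ι j ≠ i) : xpt d r ι i j = -((i : ℕ) + 1 : ℝ) := if_neg h

lemma xpt_apply_nonpos (i : Fin r) (j : Fin d) : xpt d r ι i j ≤ 0 := by
  unfold xpt
  split_ifs <;> linarith [(i : ℕ).cast_nonneg (α := ℝ)]

lemma neg_le_xpt_apply (i : Fin r) (j : Fin d) : -((i : ℕ) + 1 : ℝ) ≤ xpt d r ι i j := by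
  unfold xpt
  split_ifs <;> linarith [(i : ℕ).cast_nonneg (α := ℝ)]

lemma xpt_notMem_Aset (i : Fin r) (j : Fin d) : xpt d r ι i ∉ Aset d r j := fun hx =>
  (one_le_apply_of_mem_Aset hx).not_gt ((xpt_apply_nonpos i j).trans_lt one_pos)

lemma xpt_injective (hd : 1 ≤ d) : Injective (xpt d r ι) := by
  intro i i' h
  have h0 := congrFun h ⟨0, hd⟩
  unfold xpt at h0
  split_ifs at h0 with h1 h2 h2
  · exact h1.symm.trans h2
  · linarith [(i' : ℕ).cast_nonneg (α := ℝ)]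
  · linarith [(i : ℕ).cast_nonneg (α := ℝ)]
  · exact Fin.ext (by simpa using h0)

lemma mem_Xset_iff : x ∈ Xset d r ι ↔ (∃ i, xpt d r ι i = x) ∨ ∃ j, x ∈ Aset d r j := by
  simp [Xset, Apts]

end Configuration

abbrev AxisEquivs (d r : ℕ) (ι : Fin d → Fin r) : Type :=
  ∀ j : Fin d, Aset d r j ≃ {i : Fin r // i ≠ ι j}

section Forward

variable {d r : ℕ} {ι : Fin d → Fin r} (σ : AxisEquivs d r ι)

def partitionOf (i : Fin r) : Set (Fin d → ℝ) :=
  insert (xpt d r ι i) {x | ∃ j, ∃ h : x ∈ Aset d r j, (σ j ⟨x, h⟩ : Fin r) = i}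

lemma xpt_mem_partitionOf (i : Fin r) : xpt d r ι i ∈ partitionOf σ i :=
  Set.mem_insert _ _

lemma mem_partitionOf_iff {j : Fin d} (x : Aset d r j) (i : Fin r) :
    (x : Fin d → ℝ) ∈ partitionOf σ i ↔ (σ j x : Fin r) = i := by
  refine ⟨?_, fun h => Or.inr ⟨j, x.2, h⟩⟩
  rintro (hx | ⟨j', hj', rfl⟩)
  · exact absurd (hx ▸ x.2) (xpt_notMem_Aset i j)
  · obtain rfl : j' = j := by
      by_contra hne
      exact Set.disjoint_left.1 (Aset_disjoint hne) hj' x.2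
    rfl

lemma partitionOf_injective : Injective (partitionOf (ι := ι)) := by
  intro σ σ' h
  funext j
  ext x : 1
  refine Subtype.ext ((mem_partitionOf_iff σ' x _).1 ?_).symm
  exact h ▸ (mem_partitionOf_iff σ x _).2 rfl

lemma iUnion_partitionOf : ⋃ i, partitionOf σ i = Xset d r ι := by
  ext x
  simp only [Set.mem_iUnion, mem_Xset_iff]
  constructor
  · rintro ⟨i, rfl | ⟨j, hj, -⟩⟩
    exacts [Or.inl ⟨i, rfl⟩, Or.inr ⟨j, hj⟩]
  · rintro (⟨i, rfl⟩ | ⟨j, hj⟩)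
    exacts [⟨i, xpt_mem_partitionOf σ i⟩, ⟨_, (mem_partitionOf_iff σ ⟨x, hj⟩ _).2 rfl⟩]

lemma pairwise_disjoint_partitionOf (hd : 1 ≤ d) : Pairwise (Disjoint on partitionOf σ) := by
  intro i i' hne
  refine Set.disjoint_left.2 fun x hx hx' => ?_
  rcases hx with rfl | ⟨j, hj, rfl⟩
  · rcases hx' with h | ⟨j', hj', -⟩
    · exact hne (xpt_injective hd h)
    · exact xpt_notMem_Aset i j' hj'
  · exact hne ((mem_partitionOf_iff σ ⟨x, hj⟩ i').1 hx')

/-- `x^i + ∑_j (-x^i_j) e^j = 0`, and the `j`-th summand is a nonnegative multiple of the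
point `σ_j⁻¹ i` of `A_j` when `i ≠ i(j)` and vanishes otherwise. -/
lemma zero_mem_convexHull_partitionOf (i : Fin r) :
    (0 : Fin d → ℝ) ∈ convexHull ℝ (partitionOf σ i) := by
  classical
  refine zero_mem_convexHull_of_add_sum_eq_zero (xpt_mem_partitionOf σ i)
    (v := fun j => Pi.single j (-xpt d r ι i j)) (fun j => ?_) ?_
  · by_cases h : ι j = i
    · refine ⟨0, le_rfl, _, xpt_mem_partitionOf σ i, ?_⟩
      simp [← h, xpt_apply_self]
    · set x := (σ j).symm ⟨i, Ne.symm h⟩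
      have hx : (x : Fin d → ℝ) ∈ partitionOf σ i := (mem_partitionOf_iff σ x i).2 (by simp [x])
      refine ⟨_, div_nonneg (neg_nonneg.2 (xpt_apply_nonpos i j))
        (apply_nonneg_of_mem_Aset x.2 j), x, hx, single_eq_smul_of_mem_Aset x.2 _⟩
  · rw [Finset.univ_sum_single]
    exact add_neg_cancel _

lemma partitionOf_isTverbergPartition (hd : 1 ≤ d) :
    IsTverbergPartition d r (Xset d r ι) (partitionOf σ) :=
  ⟨iUnion_partitionOf σ, pairwise_disjoint_partitionOf σ hd, 0,
    zero_mem_convexHull_partitionOf σ⟩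

end Forward

section Backward

variable {d r : ℕ} {ι : Fin d → Fin r}

lemma exists_mem_Aset_of_zero_mem_convexHull {S : Set (Fin d → ℝ)} {i : Fin r} {j : Fin d}
    (hS : S ⊆ insert (xpt d r ι i) (⋃ k, Aset d r k)) (h0 : (0 : Fin d → ℝ) ∈ convexHull ℝ S)
    (hij : ι j ≠ i) : ∃ x ∈ Aset d r j, x ∈ S := by
  by_contra! hmiss
  -- `v ↦ ∑ v_k - (d+1) v_j` is positive on `x^i` and on every `A_k` with `k ≠ j`.
  refine zero_notMem_convexHull_of_forall_pos (f := fun v => ∑ k, v k - (d + 1) * v j)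
    ⟨fun v w => ?_, fun c v => ?_⟩ (fun x hx => ?_) h0
  · simp only [Pi.add_apply, Finset.sum_add_distrib]
    ring
  · simp only [Pi.smul_apply, smul_eq_mul, ← Finset.mul_sum]
    ring
  rcases hS hx with rfl | hxA
  · have hsum : ∑ _k : Fin d, -((i : ℕ) + 1 : ℝ) ≤ ∑ k, xpt d r ι i k :=
      Finset.sum_le_sum fun k _ => neg_le_xpt_apply i k
    simp only [Finset.sum_const, Finset.card_univ, Fintype.card_fin, nsmul_eq_mul] at hsum
    rw [xpt_apply_of_ne hij]
    nlinarith [(i : ℕ).cast_nonneg (α := ℝ)]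
  · obtain ⟨k, hk⟩ := Set.mem_iUnion.1 hxA
    have hjk : j ≠ k := by
      rintro rfl
      exact hmiss x hk hx
    rw [apply_eq_zero_of_mem_Aset hk hjk, mul_zero, sub_zero]
    calc (0 : ℝ) < 1 := one_pos
      _ ≤ x k := one_le_apply_of_mem_Aset hk
      _ ≤ ∑ k', x k' :=
        Finset.single_le_sum (fun k' _ => apply_nonneg_of_mem_Aset hk k') (Finset.mem_univ k)

variable {P : Fin r → Set (Fin d → ℝ)}

lemma subset_insert_xpt_of_isTverbergPartition (hP : IsTverbergPartition d r (Xset d r ι) P)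
    (hxP : ∀ i, xpt d r ι i ∈ P i) (i : Fin r) :
    P i ⊆ insert (xpt d r ι i) (⋃ j, Aset d r j) := by
  intro x hx
  have hX : x ∈ Xset d r ι := hP.1 ▸ Set.mem_iUnion_of_mem i hx
  rcases hX with ⟨i', rfl⟩ | hA
  · exact Or.inl (congrArg _ (eq_of_mem_of_pairwise_disjoint hP.2.1 (hxP i') hx))
  · exact Or.inr hA

lemma exists_disjoint_Aset (hr : 0 < r) (hP : Pairwise (Disjoint on P)) (j : Fin d) :
    ∃ i, Disjoint (Aset d r j) (P i) := by
  by_contra! hmeet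
  obtain ⟨f, hf, -⟩ := exists_injective_mem_of_pairwise_disjoint hP
    fun i => Set.not_disjoint_iff.1 (hmeet i)
  have := Nat.card_le_card_of_injective f hf
  rw [Nat.card_Aset, Nat.card_eq_fintype_card, Fintype.card_fin] at this
  omega

lemma eq_zero_of_forall_mem_convexHull (hdisj : Pairwise (Disjoint on P))
    (hsub : ∀ i, P i ⊆ insert (xpt d r ι i) (⋃ j, Aset d r j)) {p : Fin d → ℝ}
    (hp : ∀ i, p ∈ convexHull ℝ (P i)) : p = 0 := by
  funext j
  obtain ⟨i₀, hi₀⟩ := exists_disjoint_Aset (ι j).pos hdisj j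
  have hle : ∀ x ∈ P i₀, x j ≤ 0 := by
    intro x hx
    rcases hsub i₀ hx with rfl | hx'
    · exact xpt_apply_nonpos i₀ j
    · obtain ⟨k, hk⟩ := Set.mem_iUnion.1 hx'
      have hjk : j ≠ k := by
        rintro rfl
        exact Set.disjoint_left.1 hi₀ hk hx
      exact (apply_eq_zero_of_mem_Aset hk hjk).le
  have hge : ∀ x ∈ P (ι j), 0 ≤ x j := by
    intro x hx
    rcases hsub (ι j) hx with rfl | hx'
    · exact (xpt_apply_self j).ge
    · obtain ⟨k, hk⟩ := Set.mem_iUnion.1 hx'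
      exact apply_nonneg_of_mem_Aset hk j
  have hproj : IsLinearMap ℝ fun v : Fin d → ℝ => v j := (LinearMap.proj j).isLinear
  exact le_antisymm (convexHull_min hle (convex_halfSpace_le hproj 0) (hp i₀))
    (convexHull_min hge (convex_halfSpace_ge hproj 0) (hp (ι j)))

lemma exists_eq_partitionOf (hP : IsTverbergPartition d r (Xset d r ι) P)
    (hxP : ∀ i, xpt d r ι i ∈ P i) : ∃ σ : AxisEquivs d r ι, partitionOf σ = P := by
  have hsub := subset_insert_xpt_of_isTverbergPartition hP hxP
  obtain ⟨-, hdisj, p, hp⟩ := hP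
  have h0 : ∀ i, (0 : Fin d → ℝ) ∈ convexHull ℝ (P i) :=
    eq_zero_of_forall_mem_convexHull hdisj hsub hp ▸ hp
  have hσ : ∀ j, ∃ σj : Aset d r j ≃ {i : Fin r // i ≠ ι j},
      ∀ x, (x : Fin d → ℝ) ∈ P (σj x) := by
    intro j
    obtain ⟨f, hf, hfP⟩ := exists_injective_mem_of_pairwise_disjoint
      (P := fun i : {i : Fin r // i ≠ ι j} => P i)
      (fun i i' h => hdisj _ _ (Subtype.coe_ne_coe.2 h))
      fun i => exists_mem_Aset_of_zero_mem_convexHull (hsub i) (h0 i) (Ne.symm i.2)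
    have hbij : Bijective f := hf.bijective_of_nat_card_le (by rw [Nat.card_Aset]; simp)
    refine ⟨(Equiv.ofBijective f hbij).symm, fun x => ?_⟩
    simpa only [Equiv.ofBijective_apply_symm_apply] using hfP ((Equiv.ofBijective f hbij).symm x)
  choose σ hσ using hσ
  refine ⟨σ, funext fun i => Set.Subset.antisymm ?_ ?_⟩
  · rintro x (rfl | ⟨j, hj, rfl⟩)
    exacts [hxP i, hσ j ⟨x, hj⟩]
  · intro x hx
    rcases hsub i hx with rfl | hx'
    · exact xpt_mem_partitionOf σ i
    · obtain ⟨j, hj⟩ := Set.mem_iUnion.1 hx'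
      exact (mem_partitionOf_iff σ ⟨x, hj⟩ i).2
        (eq_of_mem_of_pairwise_disjoint hdisj (hσ j ⟨x, hj⟩) hx)

end Backward

theorem tverberg_partitions_equiv_bijections_general (d r : ℕ) (hd : 1 ≤ d)
    (ι : Fin d → Fin r) :
    ∃ e : {P : Fin r → Set (Fin d → ℝ) //
            IsTverbergPartition d r (Xset d r ι) P ∧ ∀ i, xpt d r ι i ∈ P i} ≃
          (∀ j : Fin d, (Aset d r j) ≃ {i : Fin r // i ≠ ι j}),
      ∀ (P : {P : Fin r → Set (Fin d → ℝ) //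
            IsTverbergPartition d r (Xset d r ι) P ∧ ∀ i, xpt d r ι i ∈ P i})
        (j : Fin d) (x : (Aset d r j)),
        (x : Fin d → ℝ) ∈ P.1 ((e P j x : {i : Fin r // i ≠ ι j}) : Fin r) := by
  let F : AxisEquivs d r ι → {P : Fin r → Set (Fin d → ℝ) //
      IsTverbergPartition d r (Xset d r ι) P ∧ ∀ i, xpt d r ι i ∈ P i} :=
    fun σ => ⟨partitionOf σ, partitionOf_isTverbergPartition σ hd, xpt_mem_partitionOf σ⟩
  have hF : Bijective F := by
    refine ⟨fun σ σ' h => partitionOf_injective (congrArg Subtype.val h), ?_⟩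
    rintro ⟨P, hP, hxP⟩
    obtain ⟨σ, rfl⟩ := exists_eq_partitionOf hP hxP
    exact ⟨σ, rfl⟩
  refine ⟨(Equiv.ofBijective F hF).symm, fun P j x => ?_⟩
  obtain ⟨σ, rfl⟩ := hF.2 P
  rw [Equiv.ofBijective_symm_apply_apply]
  exact (mem_partitionOf_iff σ x _).2 rfl

/-- Tverberg partitions of the constructed set `X` with `x^i ∈ X_i` are in
bijection with `d`-tuples of bijections `σ_j : A_j ≃ {1,...,r} \ {i(j)}`, where
the correspondence is given by `x ∈ X_{σ_j(x)}` for `x ∈ A_j`. -/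
theorem tverberg_partitions_equiv_bijections (d r : ℕ) (hd : 1 ≤ d) (hr : 1 ≤ r)
    (a : Fin r → ℕ) (hpos : ∀ i, 1 ≤ a i) (hle : ∀ i, a i ≤ d + 1)
    (hsum : ∑ i, a i = (d + 1) * (r - 1) + 1)
    (ι : Fin d → Fin r)
    (hι : ∀ i, (Finset.univ.filter fun j => ι j = i).card = d + 1 - a i) :
    ∃ e : {P : Fin r → Set (Fin d → ℝ) //
            IsTverbergPartition d r (Xset d r ι) P ∧ ∀ i, xpt d r ι i ∈ P i} ≃
          (∀ j : Fin d, (Aset d r j) ≃ {i : Fin r // i ≠ ι j}),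
      ∀ (P : {P : Fin r → Set (Fin d → ℝ) //
            IsTverbergPartition d r (Xset d r ι) P ∧ ∀ i, xpt d r ι i ∈ P i})
        (j : Fin d) (x : (Aset d r j)),
        (x : Fin d → ℝ) ∈ P.1 ((e P j x : {i : Fin r // i ≠ ι j}) : Fin r) :=
  tverberg_partitions_equiv_bijections_general d r hd ι
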